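/- The generating function H(z) = 1 + (k-1)·z²/(1-z²)² + Σ_{d=1}^∞ φ(d)·(1/(1-(2k-1)z^d) - 1), whose coefficient of z^r is r times the number of conjugacy classes of cyclically reduced length r in F_k (k ≥ 2), has poles at the points z with z^d = 1/(2k-1) for every d ≥ 1, hence has infinitely many poles in the open unit disk and is not a rational function. -/

import Mathlib

/-- The function `H(z) = 1 + (k-1)·z²/(1-z²)² + ∑_{d≥1} φ(d)·(1/(1-(2k-1)z^d) - 1)`,
whose Taylor coefficient of `z^r` is `r` times the number of conjugacy classes of
cyclically reduced length `r` in the free group `F_k`. -/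
noncomputable def Hfun (k : ℕ) (z : ℂ) : ℂ :=
  1 + ((k : ℂ) - 1) * z ^ 2 / (1 - z ^ 2) ^ 2 +
    ∑' d : ℕ, (Nat.totient (d + 1) : ℂ) *
      (1 / (1 - (2 * (k : ℂ) - 1) * z ^ (d + 1)) - 1)

open Finset Metric

/-- norm bound for `1/(1-w) - 1`. -/
lemma aux_inv_sub_one_norm {w : ℂ} {c : ℝ} (hw : ‖w‖ ≤ c) (hc : c < 1) :
    ‖1 / (1 - w) - 1‖ ≤ c / (1 - c) := by
  have hw1 : ‖w‖ < 1 := lt_of_le_of_lt hw hc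
  have hne : (1 : ℂ) - w ≠ 0 := by
    intro h
    have : w = 1 := by linear_combination -h
    simp [this] at hw1
  have heq : 1 / (1 - w) - 1 = w / (1 - w) := by field_simp; ring
  rw [heq, norm_div]
  have h2 : 1 - c ≤ ‖(1 : ℂ) - w‖ := by
    calc 1 - c ≤ ‖(1:ℂ)‖ - ‖w‖ := by rw [norm_one]; linarith
    _ ≤ ‖(1:ℂ) - w‖ := norm_sub_norm_le 1 w
  exact div_le_div₀ (le_trans (norm_nonneg w) hw) hw (by linarith) h2

lemma aux_summable (a b : ℝ) (h0 : 0 ≤ a) (h1 : a < 1) :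
    Summable (fun d : ℕ => ((d : ℝ) + b) * a ^ d) := by
  have hn1 : ‖a‖ < 1 := by rwa [Real.norm_eq_abs, abs_of_nonneg h0]
  have hs1 := summable_pow_mul_geometric_of_norm_lt_one 1 hn1
  have hs2 : Summable (fun d : ℕ => b * a ^ d) :=
    (summable_geometric_of_lt_one h0 h1).mul_left b
  refine ((hs1.add hs2).congr fun d => ?_)
  push_cast
  ring

set_option maxHeartbeats 2000000 in
/-- For `k ≥ 2`, the function `H`, defined by its series on the disk
`|z| < 1/(2k-1)`, is not (the restriction of) a rational function: it has
infinitely many poles, accumulating at the unit circle. -/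
theorem H_not_rational (k : ℕ) (hk : 2 ≤ k) :
    ¬ ∃ p q : Polynomial ℂ, q ≠ 0 ∧
      ∀ z : ℂ, ‖z‖ < 1 / (2 * (k : ℝ) - 1) →
        q.eval z * Hfun k z = p.eval z := by
  rintro ⟨p, q, hq, hpq⟩
  set mR : ℝ := 2 * (k : ℝ) - 1 with hmR
  have hk' : (2 : ℝ) ≤ (k : ℝ) := by exact_mod_cast hk
  have hm3 : (3 : ℝ) ≤ mR := by rw [hmR]; linarith
  have hm1 : 1 < mR := by linarith
  have hm0 : 0 < mR := by linarith
  set mC : ℂ := 2 * (k : ℂ) - 1 with hmC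
  have hmRC : ((mR : ℝ) : ℂ) = mC := by rw [hmR, hmC]; push_cast; ring
  have hnormm : ‖mC‖ = mR := by rw [← hmRC, Complex.norm_real, Real.norm_eq_abs, abs_of_pos hm0]
  have hnormpow : ∀ (z : ℂ) (i : ℕ), ‖mC * z ^ i‖ = mR * ‖z‖ ^ i := by
    intro z i; rw [norm_mul, norm_pow, hnormm]
  -- the radii
  set ξ : ℕ → ℝ := fun n => mR ^ (-(1:ℝ) / ((n:ℝ) + 1)) with hξ
  have hξpos : ∀ n, 0 < ξ n := fun n => Real.rpow_pos_of_pos hm0 _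
  have hξlt1 : ∀ n, ξ n < 1 := fun n =>
    Real.rpow_lt_one_of_one_lt_of_neg hm1
      (div_neg_of_neg_of_pos (by norm_num) (by positivity))
  have hpow : ∀ n i : ℕ, mR * ξ n ^ i = mR ^ ((1:ℝ) - (i:ℝ) / ((n:ℝ) + 1)) := by
    intro n i
    have h1 : ξ n ^ i = mR ^ ((-(1:ℝ) / ((n:ℝ) + 1)) * (i:ℝ)) := by
      rw [hξ]
      rw [← Real.rpow_natCast (mR ^ (-(1:ℝ) / ((n:ℝ) + 1))) i, ← Real.rpow_mul hm0.le]
    rw [h1, show (1:ℝ) - (i:ℝ) / ((n:ℝ) + 1) = 1 + (-(1:ℝ) / ((n:ℝ) + 1)) * (i:ℝ) by ring,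
      Real.rpow_add hm0, Real.rpow_one]
  have hone : ∀ n : ℕ, mR * ξ n ^ (n + 1) = 1 := by
    intro n
    rw [hpow n (n + 1)]
    have h2 : (1:ℝ) - ((n + 1 : ℕ) : ℝ) / ((n:ℝ) + 1) = 0 := by
      push_cast
      have : ((n:ℝ) + 1) ≠ 0 := by positivity
      field_simp; ring
    rw [h2, Real.rpow_zero]
  have hgt : ∀ n i : ℕ, i ≤ n → 1 < mR * ξ n ^ i := by
    intro n i h
    rw [hpow n i]
    refine (Real.one_lt_rpow_iff_of_pos hm0).2 (Or.inl ⟨hm1, ?_⟩)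
    have h1 : (i:ℝ) < (n:ℝ) + 1 := by exact_mod_cast Nat.lt_succ_of_le h
    have h2 : (0:ℝ) < (n:ℝ) + 1 := by positivity
    have := (div_lt_one h2).2 h1
    linarith
  have hmono : StrictMono ξ := by
    intro a b hab
    rw [hξ]
    apply (Real.rpow_lt_rpow_left_iff hm1).2
    have ha : (0:ℝ) < (a:ℝ) + 1 := by positivity
    have hb : (a:ℝ) + 1 < (b:ℝ) + 1 := by exact_mod_cast Nat.succ_lt_succ hab
    rw [neg_div, neg_div, neg_lt_neg_iff]
    exact one_div_lt_one_div_of_lt ha hb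
  -- main step : every ξ n is a root of q
  have hroot : ∀ n : ℕ, q.IsRoot ((ξ n : ℝ) : ℂ) := by
    intro n
    -- radii for this n
    have hstep : ξ n < ξ (n + 1) := hmono (Nat.lt_succ_self n)
    set ρ : ℝ := (ξ n + ξ (n + 1)) / 2 with hρdef
    have hxρ : ξ n < ρ := by rw [hρdef]; linarith
    have hρξ : ρ < ξ (n + 1) := by rw [hρdef]; linarith
    have hρ1 : ρ < 1 := lt_trans hρξ (hξlt1 (n + 1))
    have hρ0 : 0 < ρ := lt_trans (hξpos n) hxρ
    set c : ℝ := mR * ρ ^ (n + 2) with hcdef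
    have hc0 : 0 < c := by positivity
    have hc1 : c < 1 := by
      have h1 : ρ ^ (n + 2) < ξ (n + 1) ^ (n + 2) :=
        pow_lt_pow_left₀ hρξ hρ0.le (by norm_num)
      have h2 : mR * ξ (n + 1) ^ (n + 2) = 1 := hone (n + 1)
      nlinarith
    set r' : ℝ := 1 / (2 * mR) with hr'def
    have hr'0 : 0 < r' := by rw [hr'def]; positivity
    have hr'x : r' < ξ n := by
      have h1 : mR ^ (-1 : ℝ) ≤ ξ n := by
        rw [hξ]
        apply (Real.rpow_le_rpow_left_iff hm1).2
        rw [neg_div, neg_le_neg_iff]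
        have h2 : (0:ℝ) < (n:ℝ) + 1 := by positivity
        rw [div_le_one h2]
        linarith [Nat.cast_nonneg (α := ℝ) n]
      rw [Real.rpow_neg_one] at h1
      have h3 : r' < mR⁻¹ := by
        rw [hr'def, one_div, inv_lt_inv₀ (by linarith) hm0]
        linarith
      linarith
    have hr'ρ : r' < ρ := by linarith
    have hr'1 : r' < 1 := by
      have := hξlt1 n; linarith
    -- series pieces
    set F : ℕ → ℂ → ℂ := fun d z =>
      ((Nat.totient (d + 1) : ℂ)) * (1 / (1 - mC * z ^ (d + 1)) - 1) with hFdef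
    have hHfun : ∀ z : ℂ,
        Hfun k z = 1 + ((k : ℂ) - 1) * z ^ 2 / (1 - z ^ 2) ^ 2 + ∑' d, F d z := fun z => rfl
    -- summability on the small ball
    have hsummable : ∀ z : ℂ, ‖z‖ < r' → Summable (fun d => F d z) := by
      intro z hz
      have hz0 : (0:ℝ) ≤ ‖z‖ := norm_nonneg z
      have hz1 : ‖z‖ < 1 := lt_trans hz hr'1
      refine Summable.of_norm_bounded (aux_summable ‖z‖ 1 hz0 hz1) ?_
      intro d
      have hmz : mR * ‖z‖ < 1 / 2 := by
        rw [hr'def] at hz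
        rw [show (1:ℝ)/2 = mR * (1 / (2 * mR)) by field_simp]
        exact (mul_lt_mul_iff_right₀ hm0).2 hz
      have hb : ‖mC * z ^ (d + 1)‖ ≤ (1 / 2) * ‖z‖ ^ d := by
        rw [hnormpow, pow_succ, show mR * (‖z‖ ^ d * ‖z‖) = (mR * ‖z‖) * ‖z‖ ^ d by ring]
        apply mul_le_mul_of_nonneg_right hmz.le (by positivity)
      have hbb : (1 / 2 : ℝ) * ‖z‖ ^ d ≤ 1 / 2 := by
        have := pow_le_one₀ hz0 hz1.le (n := d)
        nlinarith
      have hlt1 : (1 / 2 : ℝ) * ‖z‖ ^ d < 1 := by linarith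
      have h5 := aux_inv_sub_one_norm hb hlt1
      have h6 : (1 / 2 * ‖z‖ ^ d) / (1 - 1 / 2 * ‖z‖ ^ d) ≤ ‖z‖ ^ d := by
        rw [div_le_iff₀ (by linarith)]
        nlinarith [pow_nonneg hz0 d]
      rw [hFdef]
      simp only [norm_mul, Complex.norm_natCast]
      have h7 : (Nat.totient (d + 1) : ℝ) ≤ (d : ℝ) + 1 := by
        exact_mod_cast Nat.totient_le (d + 1)
      apply mul_le_mul h7 (le_trans h5 h6) (norm_nonneg _) (by positivity)
    -- the tail
    set T : ℂ → ℂ := fun z => ∑' d, F (d + (n + 1)) z with hTdef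
    have hsplit : ∀ z : ℂ, ‖z‖ < r' →
        (∑' d, F d z) = (∑ i ∈ range (n + 1), F i z) + T z := by
      intro z hz
      exact (Summable.sum_add_tsum_nat_add (n + 1) (hsummable z hz)).symm
    -- norms on the ball of radius ρ
    have hkey : ∀ (d : ℕ) (z : ℂ), z ∈ ball (0:ℂ) ρ → ‖mC * z ^ (d + n + 2)‖ ≤ c * ρ ^ d := by
      intro d z hzmem
      rw [mem_ball_zero_iff] at hzmem
      rw [hnormpow]
      calc mR * ‖z‖ ^ (d + n + 2) ≤ mR * ρ ^ (d + n + 2) := by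
            apply mul_le_mul_of_nonneg_left _ hm0.le
            exact pow_le_pow_left₀ (norm_nonneg z) hzmem.le _
        _ = c * ρ ^ d := by rw [hcdef, show d + n + 2 = (n + 2) + d by ring, pow_add]; ring
    have hcρ : ∀ d : ℕ, c * ρ ^ d ≤ c :=
      fun d => mul_le_of_le_one_right hc0.le (pow_le_one₀ hρ0.le hρ1.le)
    have hne2 : ∀ (d : ℕ) (z : ℂ), z ∈ ball (0:ℂ) ρ →
        (1 : ℂ) - mC * z ^ (d + n + 2) ≠ 0 := by
      intro d z hzmem h
      have h1 : mC * z ^ (d + n + 2) = 1 := by linear_combination -h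
      have := hkey d z hzmem
      rw [h1] at this
      simp only [norm_one] at this
      have := hcρ d
      linarith
    have hTdiff : DifferentiableOn ℂ T (ball (0:ℂ) ρ) := by
      rw [hTdef]
      apply Complex.differentiableOn_tsum_of_summable_norm
        (u := fun d : ℕ => ((d:ℝ) + ((n:ℝ) + 2)) * ρ ^ d * (c / (1 - c)))
      · exact (aux_summable ρ ((n:ℝ) + 2) hρ0.le hρ1).mul_right _
      · intro d
        apply DifferentiableOn.const_mul
        apply DifferentiableOn.sub _ (differentiableOn_const 1)
        apply DifferentiableOn.div (differentiableOn_const 1)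
        · fun_prop
        · intro z hz
          exact hne2 d z hz
      · exact isOpen_ball
      · intro d z hzmem
        have hb := hkey d z hzmem
        have hblt : c * ρ ^ d < 1 := lt_of_le_of_lt (hcρ d) hc1
        have h5 := aux_inv_sub_one_norm hb hblt
        have h6 : (c * ρ ^ d) / (1 - c * ρ ^ d) ≤ ρ ^ d * (c / (1 - c)) := by
          rw [show ρ ^ d * (c / (1 - c)) = (c * ρ ^ d) / (1 - c) by ring]
          apply div_le_div_of_nonneg_left (by positivity) (by linarith) _
          have := hcρ d
          linarith
        show ‖F (d + (n + 1)) z‖ ≤ _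
        rw [hFdef]
        simp only [norm_mul, Complex.norm_natCast]
        have h7 : (Nat.totient (d + (n + 1) + 1) : ℝ) ≤ (d : ℝ) + ((n:ℝ) + 2) := by
          have := Nat.totient_le (d + (n + 1) + 1)
          push_cast
          exact_mod_cast le_trans (by exact_mod_cast this) (by push_cast; linarith)
        rw [mul_assoc]
        have h8 : ‖1 / (1 - mC * z ^ (d + (n + 1) + 1)) - 1‖ ≤ ρ ^ d * (c / (1 - c)) := by
          have : d + (n + 1) + 1 = d + n + 2 := by ring
          rw [this]
          exact le_trans h5 h6
        apply mul_le_mul h7 h8 (norm_nonneg _) (by positivity)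
    -- poles product
    set P : ℂ → ℂ := fun z => ∏ i ∈ range (n + 1), (1 - mC * z ^ (i + 1)) with hPdef
    set Pe : ℕ → ℂ → ℂ :=
      fun i z => ∏ j ∈ (range (n + 1)).erase i, (1 - mC * z ^ (j + 1)) with hPedef
    set Ψ : ℂ → ℂ := fun z =>
      P z * (q.eval z * (1 + ((k : ℂ) - 1) * z ^ 2 / (1 - z ^ 2) ^ 2 + T z) - p.eval z)
      + ∑ i ∈ range (n + 1),
          (Nat.totient (i + 1) : ℂ) * (mC * z ^ (i + 1)) * (q.eval z * Pe i z) with hΨdef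
    -- differentiability of Ψ on ball 0 ρ
    have hsq : ∀ z : ℂ, z ∈ ball (0:ℂ) ρ → ((1:ℂ) - z ^ 2) ^ 2 ≠ 0 := by
      intro z hzmem h
      rw [mem_ball_zero_iff] at hzmem
      have h1 : (1:ℂ) - z ^ 2 = 0 := by
        exact pow_eq_zero_iff (n := 2) (by norm_num) |>.1 h
      have h2 : z ^ 2 = 1 := by linear_combination -h1
      have h3 : ‖z‖ ^ 2 = 1 := by rw [← norm_pow, h2, norm_one]
      have h4 : ‖z‖ < 1 := lt_trans hzmem hρ1
      nlinarith [norm_nonneg z]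
    have hΨdiff : DifferentiableOn ℂ Ψ (ball (0:ℂ) ρ) := by
      rw [hΨdef]
      apply DifferentiableOn.add
      · apply DifferentiableOn.mul
        · apply Differentiable.differentiableOn
          apply Differentiable.fun_finsetProd
          intro i _
          fun_prop
        · apply DifferentiableOn.sub
            (DifferentiableOn.mul (q.differentiable.differentiableOn) ?_)
            ((Polynomial.differentiable p).differentiableOn)
          apply DifferentiableOn.add (DifferentiableOn.add (differentiableOn_const 1) ?_) hTdiff
          exact DifferentiableOn.div (by fun_prop) (by fun_prop) hsq
      · apply DifferentiableOn.fun_sum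
        intro i _
        apply Differentiable.differentiableOn
        apply Differentiable.mul (by fun_prop)
        apply Differentiable.mul q.differentiable
        apply Differentiable.fun_finsetProd
        intro j _
        fun_prop
    -- Ψ vanishes on the small ball
    have hball_ne : ∀ z : ℂ, ‖z‖ < r' → ∀ i : ℕ, (1:ℂ) - mC * z ^ (i + 1) ≠ 0 := by
      intro z hz i h
      have hz1 : ‖z‖ < 1 := lt_trans hz hr'1
      have h1 : mC * z ^ (i + 1) = 1 := by linear_combination -h
      have h2 : ‖mC * z ^ (i + 1)‖ ≤ mR * ‖z‖ := by
        rw [hnormpow]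
        apply mul_le_mul_of_nonneg_left _ hm0.le
        exact pow_le_of_le_one (norm_nonneg z) hz1.le (Nat.succ_ne_zero i)
      have h3 : mR * ‖z‖ < 1 / 2 := by
        rw [hr'def] at hz
        rw [show (1:ℝ)/2 = mR * (1 / (2 * mR)) by field_simp]
        exact (mul_lt_mul_iff_right₀ hm0).2 hz
      rw [h1, norm_one] at h2
      exact absurd (h2.trans_lt h3) (by norm_num)
    have hΨzero_small : Set.EqOn Ψ 0 (ball (0:ℂ) r') := by
      intro z hzmem
      rw [mem_ball_zero_iff] at hzmem
      have hHz : q.eval z * Hfun k z = p.eval z := by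
        apply hpq
        have h1 : r' < 1 / mR := by
          rw [hr'def]
          apply one_div_lt_one_div_of_lt hm0
          linarith
        linarith
      have hterm : ∀ i ∈ range (n + 1),
          (Nat.totient (i + 1) : ℂ) * (mC * z ^ (i + 1)) * (q.eval z * Pe i z)
            = P z * (q.eval z * F i z) := by
        intro i hi
        have hne := hball_ne z hzmem i
        have hPfac : P z = (1 - mC * z ^ (i + 1)) * Pe i z := by
          rw [hPdef, hPedef]
          exact (Finset.mul_prod_erase _ _ hi).symm
        rw [hPfac, hFdef]
        field_simp
        ring
      have hΨeq : Ψ z = P z * (q.eval z * Hfun k z - p.eval z) := by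
        rw [hΨdef]
        simp only
        rw [Finset.sum_congr rfl hterm, ← Finset.mul_sum, ← Finset.mul_sum, hHfun z, hsplit z hzmem]
        ring
      simp only [Set.mem_setOf_eq, Pi.zero_apply]
      rw [hΨeq, hHz, sub_self, mul_zero]
    -- identity theorem
    have hΨzero : Set.EqOn Ψ 0 (ball (0:ℂ) ρ) := by
      apply (hΨdiff.analyticOnNhd isOpen_ball).eqOn_zero_of_preconnected_of_eventuallyEq_zero
        (convex_ball (0:ℂ) ρ).isPreconnected (mem_ball_self hρ0)
      exact Filter.eventuallyEq_of_mem (ball_mem_nhds (0:ℂ) hr'0) hΨzero_small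
    -- evaluate at x = ξ n
    set x : ℂ := ((ξ n : ℝ) : ℂ) with hxdef
    have hxmem : x ∈ ball (0:ℂ) ρ := by
      rw [mem_ball_zero_iff, hxdef, Complex.norm_real, Real.norm_eq_abs,
        abs_of_pos (hξpos n)]
      exact hxρ
    have hxpow : ∀ i : ℕ, mC * x ^ i = ((mR * ξ n ^ i : ℝ) : ℂ) := by
      intro i
      rw [hxdef, ← hmRC]
      push_cast
      ring
    have hfac0 : (1:ℂ) - mC * x ^ (n + 1) = 0 := by
      rw [hxpow, hone n]
      simp
    have hfacne : ∀ j : ℕ, j < n → (1:ℂ) - mC * x ^ (j + 1) ≠ 0 := by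
      intro j hj h
      rw [hxpow] at h
      have h1 : ((1 - mR * ξ n ^ (j + 1) : ℝ) : ℂ) = 0 := by
        push_cast at h ⊢
        linear_combination h
      rw [Complex.ofReal_eq_zero] at h1
      have h2 := hgt n (j + 1) (Nat.succ_le_of_lt hj)
      linarith
    have hΨx : Ψ x = 0 := hΨzero hxmem
    have hPx : P x = 0 := by
      rw [hPdef]
      exact Finset.prod_eq_zero (Finset.self_mem_range_succ n) hfac0
    have hsum_eval : ∑ i ∈ range (n + 1),
        (Nat.totient (i + 1) : ℂ) * (mC * x ^ (i + 1)) * (q.eval x * Pe i x)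
          = (Nat.totient (n + 1) : ℂ) * (q.eval x * Pe n x) := by
      rw [Finset.sum_eq_single n]
      · have h1 : mC * x ^ (n + 1) = 1 := by rw [hxpow, hone n]; simp
        rw [h1, mul_one]
      · intro i hi hin
        have hPe0 : Pe i x = 0 := by
          rw [hPedef]
          exact Finset.prod_eq_zero
            (Finset.mem_erase.mpr ⟨Ne.symm hin, Finset.self_mem_range_succ n⟩) hfac0
        rw [hPe0]
        ring
      · intro h
        exact absurd (Finset.self_mem_range_succ n) h
    have hPen : Pe n x ≠ 0 := by
      rw [hPedef]
      apply Finset.prod_ne_zero_iff.mpr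
      intro j hj
      obtain ⟨hjn, hjr⟩ := Finset.mem_erase.mp hj
      exact hfacne j (lt_of_le_of_ne (Nat.lt_succ_iff.mp (Finset.mem_range.mp hjr)) hjn)
    have hφ : (Nat.totient (n + 1) : ℂ) ≠ 0 :=
      Nat.cast_ne_zero.mpr (Nat.totient_pos.mpr n.succ_pos).ne'
    rw [hΨdef] at hΨx
    simp only at hΨx
    rw [hPx, zero_mul, zero_add, hsum_eval] at hΨx
    have h9 := (mul_eq_zero.mp hΨx).resolve_left hφ
    exact (mul_eq_zero.mp h9).resolve_right hPen


  -- conclusion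
  apply hq
  apply Polynomial.eq_zero_of_infinite_isRoot
  apply Set.infinite_of_injective_forall_mem
    (f := fun n : ℕ => ((ξ n : ℝ) : ℂ))
  · intro a b hab
    simp only [Complex.ofReal_inj] at hab
    exact hmono.injective hab
  · exact hroot
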